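/- Let φ = νñ.σ be a frame with restricted name s ∈ ñ such that φ ⊬ s. If φ is a well-formed frame w.r.t. s, then φ is an extended well-formed frame w.r.t. s. -/

import Mathlib

namespace Crypto

/-- Terms of the free algebra over the cryptographic signature
    Σ = {enc, dec, enca, deca, pub, priv, pair, π₁ (fst), π₂ (snd), sign, check, retrieve}
    together with the constant ok, variables and names. -/
inductive Term : Type where
  | var : ℕ → Term
  | name : ℕ → Term
  | ok : Term
  | pub : Term → Term
  | priv : Term → Term
  | fst : Term → Term
  | snd : Term → Term
  | retrieve : Term → Term
  | pair : Term → Term → Term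
  | sign : Term → Term → Term
  | dec : Term → Term → Term
  | deca : Term → Term → Term
  | enc : Term → Term → Term → Term
  | enca : Term → Term → Term → Term
  | check : Term → Term → Term → Term
deriving DecidableEq

namespace Term

/-- Application of a substitution of terms for variables. -/
def subst (θ : ℕ → Term) : Term → Term
  | var x => θ x
  | name n => name n
  | ok => ok
  | pub t => pub (t.subst θ)
  | priv t => priv (t.subst θ)
  | fst t => fst (t.subst θ)
  | snd t => snd (t.subst θ)
  | retrieve t => retrieve (t.subst θ)
  | pair a b => pair (a.subst θ) (b.subst θ)
  | sign a b => sign (a.subst θ) (b.subst θ)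
  | dec a b => dec (a.subst θ) (b.subst θ)
  | deca a b => deca (a.subst θ) (b.subst θ)
  | enc a b c => enc (a.subst θ) (b.subst θ) (c.subst θ)
  | enca a b c => enca (a.subst θ) (b.subst θ) (c.subst θ)
  | check a b c => check (a.subst θ) (b.subst θ) (c.subst θ)

/-- Application of a substitution of terms for names. -/
def nsubst (θ : ℕ → Term) : Term → Term
  | var x => var x
  | name n => θ n
  | ok => ok
  | pub t => pub (t.nsubst θ)
  | priv t => priv (t.nsubst θ)
  | fst t => fst (t.nsubst θ)
  | snd t => snd (t.nsubst θ)
  | retrieve t => retrieve (t.nsubst θ)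
  | pair a b => pair (a.nsubst θ) (b.nsubst θ)
  | sign a b => sign (a.nsubst θ) (b.nsubst θ)
  | dec a b => dec (a.nsubst θ) (b.nsubst θ)
  | deca a b => deca (a.nsubst θ) (b.nsubst θ)
  | enc a b c => enc (a.nsubst θ) (b.nsubst θ) (c.nsubst θ)
  | enca a b c => enca (a.nsubst θ) (b.nsubst θ) (c.nsubst θ)
  | check a b c => check (a.nsubst θ) (b.nsubst θ) (c.nsubst θ)

/-- Replacement of every occurrence of the name `s` by the term `M` : `T[s ↦ M]`. -/
def substName (s : ℕ) (M : Term) (t : Term) : Term :=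
  t.nsubst fun n => if n = s then M else name n

/-- Renaming of names by names. -/
def renameNames (σ : ℕ → ℕ) (t : Term) : Term :=
  t.nsubst fun n => name (σ n)

/-- The set of variables of a term. -/
def vars : Term → Finset ℕ
  | var x => {x}
  | name _ => ∅
  | ok => ∅
  | pub t => t.vars
  | priv t => t.vars
  | fst t => t.vars
  | snd t => t.vars
  | retrieve t => t.vars
  | pair a b => a.vars ∪ b.vars
  | sign a b => a.vars ∪ b.vars
  | dec a b => a.vars ∪ b.vars
  | deca a b => a.vars ∪ b.vars
  | enc a b c => a.vars ∪ b.vars ∪ c.vars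
  | enca a b c => a.vars ∪ b.vars ∪ c.vars
  | check a b c => a.vars ∪ b.vars ∪ c.vars

/-- The set of names of a term. -/
def names : Term → Finset ℕ
  | var _ => ∅
  | name n => {n}
  | ok => ∅
  | pub t => t.names
  | priv t => t.names
  | fst t => t.names
  | snd t => t.names
  | retrieve t => t.names
  | pair a b => a.names ∪ b.names
  | sign a b => a.names ∪ b.names
  | dec a b => a.names ∪ b.names
  | deca a b => a.names ∪ b.names
  | enc a b c => a.names ∪ b.names ∪ c.names
  | enca a b c => a.names ∪ b.names ∪ c.names
  | check a b c => a.names ∪ b.names ∪ c.names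

/-- A term is ground (closed) if it has no variables. -/
def Ground (t : Term) : Prop := t.vars = ∅

/-- The term contains no occurrence of the symbol priv. -/
def noPriv : Term → Prop
  | var _ => True
  | name _ => True
  | ok => True
  | pub t => t.noPriv
  | priv _ => False
  | fst t => t.noPriv
  | snd t => t.noPriv
  | retrieve t => t.noPriv
  | pair a b => a.noPriv ∧ b.noPriv
  | sign a b => a.noPriv ∧ b.noPriv
  | dec a b => a.noPriv ∧ b.noPriv
  | deca a b => a.noPriv ∧ b.noPriv
  | enc a b c => a.noPriv ∧ b.noPriv ∧ c.noPriv
  | enca a b c => a.noPriv ∧ b.noPriv ∧ c.noPriv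
  | check a b c => a.noPriv ∧ b.noPriv ∧ c.noPriv

/-- The term contains no destructor symbol (π₁, π₂, dec, deca, check, retrieve). -/
def noDestr : Term → Prop
  | var _ => True
  | name _ => True
  | ok => True
  | pub t => t.noDestr
  | priv t => t.noDestr
  | fst _ => False
  | snd _ => False
  | retrieve _ => False
  | pair a b => a.noDestr ∧ b.noDestr
  | sign a b => a.noDestr ∧ b.noDestr
  | dec _ _ => False
  | deca _ _ => False
  | enc a b c => a.noDestr ∧ b.noDestr ∧ c.noDestr
  | enca a b c => a.noDestr ∧ b.noDestr ∧ c.noDestr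
  | check _ _ _ => False

/-- Subterm at a position (positions are lists of positive integers). -/
def get? : Term → List ℕ → Option Term
  | t, [] => some t
  | pub t, 1 :: p => t.get? p
  | priv t, 1 :: p => t.get? p
  | fst t, 1 :: p => t.get? p
  | snd t, 1 :: p => t.get? p
  | retrieve t, 1 :: p => t.get? p
  | pair a _, 1 :: p => a.get? p
  | pair _ b, 2 :: p => b.get? p
  | sign a _, 1 :: p => a.get? p
  | sign _ b, 2 :: p => b.get? p
  | dec a _, 1 :: p => a.get? p
  | dec _ b, 2 :: p => b.get? p
  | deca a _, 1 :: p => a.get? p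
  | deca _ b, 2 :: p => b.get? p
  | enc a _ _, 1 :: p => a.get? p
  | enc _ b _, 2 :: p => b.get? p
  | enc _ _ c, 3 :: p => c.get? p
  | enca a _ _, 1 :: p => a.get? p
  | enca _ b _, 2 :: p => b.get? p
  | enca _ _ c, 3 :: p => c.get? p
  | check a _ _, 1 :: p => a.get? p
  | check _ b _, 2 :: p => b.get? p
  | check _ _ c, 3 :: p => c.get? p
  | _, _ => none

/-- Depth of a term (variables, names and constants have depth 0). -/
def depth : Term → ℕ
  | var _ => 0
  | name _ => 0
  | ok => 0
  | pub t => t.depth + 1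
  | priv t => t.depth + 1
  | fst t => t.depth + 1
  | snd t => t.depth + 1
  | retrieve t => t.depth + 1
  | pair a b => max a.depth b.depth + 1
  | sign a b => max a.depth b.depth + 1
  | dec a b => max a.depth b.depth + 1
  | deca a b => max a.depth b.depth + 1
  | enc a b c => max a.depth (max b.depth c.depth) + 1
  | enca a b c => max a.depth (max b.depth c.depth) + 1
  | check a b c => max a.depth (max b.depth c.depth) + 1

/-- Number of occurrences of the variable `x` in a term. -/
def countVar (x : ℕ) : Term → ℕ
  | var y => if y = x then 1 else 0
  | name _ => 0
  | ok => 0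
  | pub t => t.countVar x
  | priv t => t.countVar x
  | fst t => t.countVar x
  | snd t => t.countVar x
  | retrieve t => t.countVar x
  | pair a b => a.countVar x + b.countVar x
  | sign a b => a.countVar x + b.countVar x
  | dec a b => a.countVar x + b.countVar x
  | deca a b => a.countVar x + b.countVar x
  | enc a b c => a.countVar x + b.countVar x + c.countVar x
  | enca a b c => a.countVar x + b.countVar x + c.countVar x
  | check a b c => a.countVar x + b.countVar x + c.countVar x

end Term

open Term

/-- Identifiers of the six rewrite rules of R_E. -/
inductive RuleId : Type where
  | p1 | p2 | rdec | rdeca | rcheck | rretrieve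
deriving DecidableEq

/-- Left-hand sides of the rules of R_E (with scheme variables var 1, var 2, var 3). -/
def lhs : RuleId → Term
  | .p1 => .fst (.pair (.var 1) (.var 2))
  | .p2 => .snd (.pair (.var 1) (.var 2))
  | .rdec => .dec (.enc (.var 1) (.var 2) (.var 3)) (.var 2)
  | .rdeca => .deca (.enca (.var 1) (.pub (.var 2)) (.var 3)) (.priv (.var 2))
  | .rcheck => .check (.var 1) (.sign (.var 1) (.priv (.var 2))) (.pub (.var 2))
  | .rretrieve => .retrieve (.sign (.var 1) (.var 2))

/-- Right-hand sides of the rules of R_E. -/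
def rhs : RuleId → Term
  | .p1 => .var 1
  | .p2 => .var 2
  | .rdec => .var 1
  | .rdeca => .var 1
  | .rcheck => .ok
  | .rretrieve => .var 1

/-- `Rule u v` : the pair (u, v) is an instance of one of the six rules of R_E. -/
def Rule (u v : Term) : Prop :=
  ∃ (i : RuleId) (θ : ℕ → Term), u = (lhs i).subst θ ∧ v = (rhs i).subst θ

/-- One-step rewriting with R_E, closed under all contexts. -/
inductive Step : Term → Term → Prop where
  | rule {u v} : Rule u v → Step u v
  | cpub {a a'} : Step a a' → Step (.pub a) (.pub a')
  | cpriv {a a'} : Step a a' → Step (.priv a) (.priv a')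
  | cfst {a a'} : Step a a' → Step (.fst a) (.fst a')
  | csnd {a a'} : Step a a' → Step (.snd a) (.snd a')
  | cretrieve {a a'} : Step a a' → Step (.retrieve a) (.retrieve a')
  | cpair₁ {a a' b} : Step a a' → Step (.pair a b) (.pair a' b)
  | cpair₂ {a b b'} : Step b b' → Step (.pair a b) (.pair a b')
  | csign₁ {a a' b} : Step a a' → Step (.sign a b) (.sign a' b)
  | csign₂ {a b b'} : Step b b' → Step (.sign a b) (.sign a b')
  | cdec₁ {a a' b} : Step a a' → Step (.dec a b) (.dec a' b)
  | cdec₂ {a b b'} : Step b b' → Step (.dec a b) (.dec a b')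
  | cdeca₁ {a a' b} : Step a a' → Step (.deca a b) (.deca a' b)
  | cdeca₂ {a b b'} : Step b b' → Step (.deca a b) (.deca a b')
  | cenc₁ {a a' b c} : Step a a' → Step (.enc a b c) (.enc a' b c)
  | cenc₂ {a b b' c} : Step b b' → Step (.enc a b c) (.enc a b' c)
  | cenc₃ {a b c c'} : Step c c' → Step (.enc a b c) (.enc a b c')
  | cenca₁ {a a' b c} : Step a a' → Step (.enca a b c) (.enca a' b c)
  | cenca₂ {a b b' c} : Step b b' → Step (.enca a b c) (.enca a b' c)
  | cenca₃ {a b c c'} : Step c c' → Step (.enca a b c) (.enca a b c')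
  | ccheck₁ {a a' b c} : Step a a' → Step (.check a b c) (.check a' b c)
  | ccheck₂ {a b b' c} : Step b b' → Step (.check a b c) (.check a b' c)
  | ccheck₃ {a b c c'} : Step c c' → Step (.check a b c) (.check a b c')

/-- Reflexive-transitive closure of rewriting. -/
def Steps : Term → Term → Prop := Relation.ReflTransGen Step

/-- The equational theory E : convertibility generated by R_E. -/
inductive EqE : Term → Term → Prop where
  | step {a b} : Step a b → EqE a b
  | refl (a) : EqE a a
  | symm {a b} : EqE a b → EqE b a
  | trans {a b c} : EqE a b → EqE b c → EqE a c

/-- A term is in R_E-normal form if no rewrite step applies to it. -/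
def NormalForm (t : Term) : Prop := ∀ u, ¬ Step t u

/-- A frame νñ.σ : a finite set of restricted names, a finite domain of variables,
    and a substitution. -/
structure Frame where
  restricted : Finset ℕ
  dom : Finset ℕ
  assign : ℕ → Term

/-- A term is public w.r.t. a frame if it uses no restricted name and no priv symbol. -/
def PublicFor (φ : Frame) (t : Term) : Prop :=
  (∀ n ∈ t.names, n ∉ φ.restricted) ∧ t.noPriv

/-- The range of (the substitution of) a frame. -/
def ran (φ : Frame) : Set Term := {t | ∃ x ∈ φ.dom, t = φ.assign x}

/-- Dolev-Yao deducibility from a frame, modulo the equational theory E. -/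
inductive Deduces (φ : Frame) : Term → Prop where
  | ax {x : ℕ} : x ∈ φ.dom → Deduces φ (φ.assign x)
  | free {n : ℕ} : n ∉ φ.restricted → Deduces φ (.name n)
  | dok : Deduces φ .ok
  | dpub {t} : Deduces φ t → Deduces φ (.pub t)
  | dfst {t} : Deduces φ t → Deduces φ (.fst t)
  | dsnd {t} : Deduces φ t → Deduces φ (.snd t)
  | dretrieve {t} : Deduces φ t → Deduces φ (.retrieve t)
  | dpair {a b} : Deduces φ a → Deduces φ b → Deduces φ (.pair a b)
  | dsign {a b} : Deduces φ a → Deduces φ b → Deduces φ (.sign a b)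
  | ddec {a b} : Deduces φ a → Deduces φ b → Deduces φ (.dec a b)
  | ddeca {a b} : Deduces φ a → Deduces φ b → Deduces φ (.deca a b)
  | denc {a b c} : Deduces φ a → Deduces φ b → Deduces φ c → Deduces φ (.enc a b c)
  | denca {a b c} : Deduces φ a → Deduces φ b → Deduces φ c → Deduces φ (.enca a b c)
  | dcheck {a b c} : Deduces φ a → Deduces φ b → Deduces φ c → Deduces φ (.check a b c)
  | deq {t t'} : Deduces φ t → EqE t t' → Deduces φ t'

/-- A frame passes the public test (U,V) if Uσ =_E Vσ. -/
def passes (φ : Frame) (U V : Term) : Prop :=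
  EqE (U.subst φ.assign) (V.subst φ.assign)

/-- Static equivalence: the two frames have the same domain and pass the same public tests. -/
def StaticEq (φ ψ : Frame) : Prop :=
  φ.dom = ψ.dom ∧
  ∀ U V : Term, PublicFor φ U → PublicFor ψ U → PublicFor φ V → PublicFor ψ V →
    U.vars ⊆ φ.dom → V.vars ⊆ φ.dom → (passes φ U V ↔ passes ψ U V)

/-- The frame φ[s ↦ M] : substitute M for the name s in every term of the range. -/
def substFrameName (s : ℕ) (M : Term) (φ : Frame) : Frame :=
  ⟨φ.restricted, φ.dom, fun x => (φ.assign x).substName s M⟩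

/-- `IsEnc t a k r` : t is the (symmetric or asymmetric) encryption of a with key k
    and randomness r. -/
inductive IsEnc : Term → Term → Term → Term → Prop where
  | enc {a k r} : IsEnc (.enc a k r) a k r
  | enca {a k r} : IsEnc (.enca a k r) a k r

/-- A term is a ciphertext (head symbol enc or enca). -/
def isCipher (t : Term) : Prop := ∃ a k r, IsEnc t a k r

/-- Agent encryption w.r.t. a set of names: the randomness argument is one of those names. -/
def AgentEnc (ns : Finset ℕ) (t : Term) : Prop :=
  ∃ a k r, r ∈ ns ∧ IsEnc t a k (.name r)

/-- The encryption `t` is probabilistic w.r.t. the set S of terms: its randomness occurs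
    in members of S only as the randomness of the identical ciphertext. -/
def ProbEnc (S : Set Term) (t : Term) : Prop :=
  ∀ a k r, IsEnc t a k r →
    ∀ W ∈ S, ∀ p : List ℕ, W.get? p = some r →
      ∃ q : List ℕ, p = q ++ [3] ∧ W.get? q = some t

/-- The name s occurs in no key, randomness, pub/priv or signature-key subterm of U. -/
def KeyRandOk (s : ℕ) (U : Term) : Prop :=
  ∀ (p : List ℕ) (t : Term), U.get? p = some t →
    (∀ m k r, t = .enc m k r → s ∉ k.names ∧ s ∉ r.names) ∧
    (∀ m k r, t = .enca m k r → s ∉ k.names ∧ s ∉ r.names) ∧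
    (∀ m k, t = .sign m k → s ∉ k.names) ∧
    (∀ w, t = .pub w → s ∉ w.names) ∧
    (∀ w, t = .priv w → s ∉ w.names)

/-- Well-formed frame w.r.t. the name s. -/
def WellFormed (φ : Frame) (s : ℕ) : Prop :=
  (∀ x ∈ φ.dom, ∀ (p : List ℕ) (t : Term), (φ.assign x).get? p = some t → isCipher t →
      AgentEnc (φ.restricted \ {s}) t ∧ ProbEnc (ran φ) t) ∧
  (∀ x ∈ φ.dom, KeyRandOk s (φ.assign x)) ∧
  (∀ x ∈ φ.dom, (φ.assign x).noDestr)

/-- Head symbol is pair or sign. -/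
def IsPairOrSign : Term → Prop
  | .pair _ _ => True
  | .sign _ _ => True
  | _ => False

/-- Extended well-formed frame w.r.t. the name s. -/
def ExtWellFormed (φ : Frame) (s : ℕ) : Prop :=
  (∀ x ∈ φ.dom, NormalForm (φ.assign x)) ∧
  (∀ x ∈ φ.dom, ∀ (p : List ℕ) (t : Term), (φ.assign x).get? p = some t →
      AgentEnc φ.restricted t → ProbEnc (ran φ) t) ∧
  (∀ x ∈ φ.dom, ∀ qs : List ℕ, (φ.assign x).get? qs = some (.name s) →
      ∃ (qe : List ℕ) (t : Term), (φ.assign x).get? qe = some t ∧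
        AgentEnc (φ.restricted \ {s}) t ∧ (qe ++ [1]) <+: qs ∧
        ∀ (q : List ℕ) (u : Term), qe <+: q → q ≠ qe → q <+: qs → q ≠ qs →
          (φ.assign x).get? q = some u → IsPairOrSign u)

/-- W is a subterm of some term in the range of the frame. -/
def InRanSubterm (φ : Frame) (W : Term) : Prop :=
  ∃ y ∈ φ.dom, ∃ p : List ℕ, (φ.assign y).get? p = some W

/-- Every occurrence of the name s in W lies strictly below an encryption. -/
def SAlwaysUnderEnc (s : ℕ) (W : Term) : Prop :=
  ∀ qs : List ℕ, W.get? qs = some (.name s) →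
    ∃ (q : List ℕ) (t : Term), q <+: qs ∧ q ≠ qs ∧ W.get? q = some t ∧ isCipher t

/-- Head symbol is a destructor. -/
def IsDestrHead : Term → Prop
  | .fst _ => True
  | .snd _ => True
  | .dec _ _ => True
  | .deca _ _ => True
  | .check _ _ _ => True
  | .retrieve _ => True
  | _ => False

end Crypto

/-! Destructor-free terms are R_E-normal, since every left-hand side of R_E has a destructor at
its head. For the occurrences of `s`, follow the path from the root of a frame term down to one
of them: well-formedness leaves on it only pairs, signatures entered through their message, and
(agent) encryptions entered through their plaintext. If the path crosses an encryption, the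
lowest one is the required witness; otherwise projections and `retrieve` extract `s` from the
frame term, contradicting `φ ⊬ s`. -/

namespace Crypto

namespace Term

@[simp] theorem get?_nil (W : Term) : W.get? [] = some W := by
  cases W <;> rfl

theorem get?_cons (W : Term) (i : ℕ) (p : List ℕ) :
    W.get? (i :: p) = (W.get? [i]).bind (·.get? p) := by
  cases W <;> rcases i with _ | _ | _ | _ | i <;> simp [get?]

theorem get?_append (W : Term) (p q : List ℕ) :
    W.get? (p ++ q) = (W.get? p).bind (·.get? q) := by
  induction p generalizing W with
  | nil => simp
  | cons i p ih =>
    rw [List.cons_append, get?_cons, get?_cons W i p]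
    cases W.get? [i] <;> simp [ih]

theorem names_subset_of_get?_singleton {W c : Term} {i : ℕ} (h : W.get? [i] = some c) :
    c.names ⊆ W.names := by
  cases W <;> rcases i with _ | _ | _ | _ | i <;> simp [get?] at h <;> subst h <;>
    intro n hn <;> simp [names, hn]

theorem noDestr_of_get?_singleton {W c : Term} {i : ℕ} (hW : W.noDestr)
    (h : W.get? [i] = some c) : c.noDestr := by
  cases W <;> rcases i with _ | _ | _ | _ | i <;> simp [get?] at h <;> subst h <;>
    simp_all [noDestr]

theorem names_subset_of_get? {W t : Term} {p : List ℕ} (h : W.get? p = some t) :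
    t.names ⊆ W.names := by
  induction p generalizing W with
  | nil => cases (get?_nil W).symm.trans h; rfl
  | cons i p ih =>
    rw [get?_cons, Option.bind_eq_some_iff] at h
    obtain ⟨c, hc, hct⟩ := h
    exact (ih hct).trans (names_subset_of_get?_singleton hc)

theorem noDestr_of_get? {W t : Term} {p : List ℕ} (hW : W.noDestr) (h : W.get? p = some t) :
    t.noDestr := by
  induction p generalizing W with
  | nil => cases (get?_nil W).symm.trans h; exact hW
  | cons i p ih =>
    rw [get?_cons, Option.bind_eq_some_iff] at h
    obtain ⟨c, hc, hct⟩ := h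
    exact ih (noDestr_of_get?_singleton hW hc) hct

theorem normalForm_of_noDestr {t : Term} (ht : t.noDestr) : NormalForm t := by
  intro u st
  induction st with
  | rule hr =>
    obtain ⟨i, θ, rfl, -⟩ := hr
    cases i <;> simp [lhs, subst, noDestr] at ht
  | _ => simp_all [noDestr]

end Term

open Term

theorem keyRandOk_of_get? {s : ℕ} {W t : Term} {p : List ℕ} (hW : KeyRandOk s W)
    (h : W.get? p = some t) : KeyRandOk s t :=
  fun q v hv => hW (p ++ q) v (by rw [Term.get?_append, h]; exact hv)

theorem Deduces.of_pair_left {φ : Frame} {a b : Term} (h : Deduces φ (.pair a b)) :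
    Deduces φ a :=
  h.dfst.deq (.step (.rule ⟨.p1, fun n => if n = 1 then a else b, by simp [lhs, subst],
    by simp [rhs, subst]⟩))

theorem Deduces.of_pair_right {φ : Frame} {a b : Term} (h : Deduces φ (.pair a b)) :
    Deduces φ b :=
  h.dsnd.deq (.step (.rule ⟨.p2, fun n => if n = 1 then a else b, by simp [lhs, subst],
    by simp [rhs, subst]⟩))

theorem Deduces.of_sign {φ : Frame} {a b : Term} (h : Deduces φ (.sign a b)) :
    Deduces φ a :=
  h.dretrieve.deq (.step (.rule ⟨.rretrieve, fun n => if n = 1 then a else b,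
    by simp [lhs, subst], by simp [rhs, subst]⟩))

theorem KeyRandOk.child_cases {s i : ℕ} {W c : Term} (hd : W.noDestr) (hK : KeyRandOk s W)
    (hc : W.get? [i] = some c) (hs : s ∈ c.names) :
    (isCipher W ∧ i = 1) ∨ (IsPairOrSign W ∧ ∀ φ, Deduces φ W → Deduces φ c) := by
  -- `hd` rules out destructor heads; the root clauses of `hK` rule out the children that are
  -- keys, randomness, signature keys or arguments of `pub`/`priv`.
  obtain ⟨hEnc, hEnca, hSign, hPub, hPriv⟩ := hK [] W (get?_nil W)
  cases W <;> rcases i with _ | _ | _ | _ | i <;> simp [get?] at hc <;> subst hc <;>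
    simp_all [noDestr, IsPairOrSign, isCipher]
  all_goals first
    | exact ⟨_, _, _, .enc⟩
    | exact ⟨_, _, _, .enca⟩
    | exact Or.inr fun _ h => h.of_pair_left
    | exact fun _ h => h.of_pair_right
    | exact Or.inr fun _ h => h.of_sign

def PairSignAbove (W : Term) (qs : List ℕ) : Prop :=
  ∀ q u, q <+: qs → q ≠ qs → W.get? q = some u → IsPairOrSign u

def PairSignBetween (W : Term) (qe qs : List ℕ) : Prop :=
  ∀ q u, qe <+: q → q ≠ qe → q <+: qs → q ≠ qs → W.get? q = some u → IsPairOrSign u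

theorem PairSignAbove.cons {W c : Term} {i : ℕ} {qs : List ℕ} (h : PairSignAbove c qs)
    (hW : IsPairOrSign W) (hc : W.get? [i] = some c) : PairSignAbove W (i :: qs) := by
  rintro q u hq hne hu
  obtain rfl | ⟨q', rfl, hq'⟩ := List.prefix_cons_iff.mp hq
  · cases (get?_nil W).symm.trans hu
    exact hW
  · rw [get?_cons, hc] at hu
    exact h q' u hq' (fun h' => hne (h' ▸ rfl)) hu

theorem PairSignAbove.pairSignBetween_nil {W c : Term} {i : ℕ} {qs : List ℕ}
    (h : PairSignAbove c qs) (hc : W.get? [i] = some c) : PairSignBetween W [] (i :: qs) := by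
  rintro q u - hq0 hq hne hu
  obtain rfl | ⟨q', rfl, hq'⟩ := List.prefix_cons_iff.mp hq
  · exact absurd rfl hq0
  · rw [get?_cons, hc] at hu
    exact h q' u hq' (fun h' => hne (h' ▸ rfl)) hu

theorem PairSignBetween.cons {W c : Term} {i : ℕ} {qe qs : List ℕ} (h : PairSignBetween c qe qs)
    (hc : W.get? [i] = some c) : PairSignBetween W (i :: qe) (i :: qs) := by
  rintro q u hqe hne' hq hne hu
  obtain rfl | ⟨q', rfl, hq'⟩ := List.prefix_cons_iff.mp hq
  · simp at hqe
  · rw [get?_cons, hc] at hu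
    exact h q' u (List.cons_prefix_cons.mp hqe).2 (fun h' => hne' (h' ▸ rfl)) hq'
      (fun h' => hne (h' ▸ rfl)) hu

theorem exists_cipher_above_or_deduces {s : ℕ} {W : Term} {qs : List ℕ} (hd : W.noDestr)
    (hK : KeyRandOk s W) (hqs : W.get? qs = some (.name s)) :
    (∃ qe t, W.get? qe = some t ∧ isCipher t ∧ qe ++ [1] <+: qs ∧ PairSignBetween W qe qs) ∨
      (PairSignAbove W qs ∧ ∀ φ, Deduces φ W → Deduces φ (.name s)) := by
  induction qs generalizing W with
  | nil =>
    cases (get?_nil W).symm.trans hqs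
    exact .inr ⟨fun q _ hq hne _ => absurd (List.prefix_nil.mp hq) hne, fun _ => id⟩
  | cons i qs ih =>
    obtain ⟨c, hc, hcs⟩ := Option.bind_eq_some_iff.mp ((get?_cons W i qs).symm.trans hqs)
    have hs : s ∈ c.names := names_subset_of_get? hcs (by simp [names])
    rcases ih (noDestr_of_get? hd hc) (keyRandOk_of_get? hK hc) hcs with
      ⟨qe, t, ht, htc, hpre, hbetween⟩ | ⟨habove, hded⟩
    · refine .inl ⟨i :: qe, t, ?_, htc, List.cons_prefix_cons.mpr ⟨rfl, hpre⟩, hbetween.cons hc⟩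
      rw [get?_cons, hc]
      exact ht
    · rcases hK.child_cases hd hc hs with ⟨hW, rfl⟩ | ⟨hW, hWc⟩
      · exact .inl ⟨[], W, get?_nil W, hW, by simp, habove.pairSignBetween_nil hc⟩
      · exact .inr ⟨habove.cons hW hc, fun φ h => hded φ (hWc φ h)⟩

theorem wellFormed_is_extWellFormed_general (φ : Frame) (s : ℕ)
    (hnd : ¬ Deduces φ (.name s)) (hwf : WellFormed φ s) : ExtWellFormed φ s := by
  obtain ⟨hcipher, hkey, hnoDestr⟩ := hwf
  refine ⟨fun x hx => normalForm_of_noDestr (hnoDestr x hx),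
    fun x hx p t hpt ⟨a, k, _, _, he⟩ => (hcipher x hx p t hpt ⟨a, k, _, he⟩).2,
    fun x hx qs hqs => ?_⟩
  rcases exists_cipher_above_or_deduces (hnoDestr x hx) (hkey x hx) hqs with
    ⟨qe, t, ht, htc, hpre, hbetween⟩ | ⟨-, hded⟩
  · exact ⟨qe, t, ht, (hcipher x hx qe t ht htc).1, hpre, hbetween⟩
  · exact absurd (hded φ (.ax hx)) hnd

/-- a well-formed frame with s not deducible is extended well-formed. -/
theorem wellFormed_is_extWellFormed (φ : Frame) (s : ℕ) (hs : s ∈ φ.restricted)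
    (hnd : ¬ Deduces φ (.name s)) (hwf : WellFormed φ s) : ExtWellFormed φ s :=
  wellFormed_is_extWellFormed_general φ s hnd hwf

end Crypto
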